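/- Characterisation of the induction-iteration predicates: define P₀ s := (¬B s → Q s) and P_{i+1} s := (B s → P_i (f s)). Then for every i and every state s, P_i s holds if and only if: whenever B (f^[k] s) holds for all k < i and ¬B (f^[i] s) holds (i.e., the loop started in s exits after exactly i iterations), the exit state satisfies Q (f^[i] s). -/
import Mathlib


/-- The induction-iteration predicates: `P₀ s := (¬B s → Q s)` and
`P_{i+1} s := (B s → P_i (f s))`. -/
def iterPred {σ : Type*} (f : σ → σ) (B Q : σ → Prop) : ℕ → σ → Prop
  | 0 => fun s => ¬ B s → Q s
  | i + 1 => fun s => B s → iterPred f B Q i (f s)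

/-- Characterisation of the induction-iteration predicates: `P_i s` holds iff
whenever the loop started in `s` exits after exactly `i` iterations, the exit
state satisfies `Q`. -/
theorem iterPred_iff {σ : Type*} (f : σ → σ) (B Q : σ → Prop) :
    ∀ (i : ℕ) (s : σ), iterPred f B Q i s ↔
      ((∀ k < i, B (f^[k] s)) → ¬ B (f^[i] s) → Q (f^[i] s)) := by
  intro i
  induction i with
  | zero =>
    intro s
    simp [iterPred]
  | succ n ih =>
    intro s
    simp only [iterPred, ih (f s)]
    constructor
    · intro h hall hnb
      have hb : B s := hall 0 (Nat.succ_pos n)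
      have := h hb (fun k hk => by
        rw [← Function.iterate_succ_apply]
        exact hall (k + 1) (Nat.succ_lt_succ hk))
      rw [← Function.iterate_succ_apply] at this
      exact this (by rwa [Function.iterate_succ_apply])
    · intro h hb hall hnb
      rw [← Function.iterate_succ_apply]
      apply h
      · intro k hk
        cases k with
        | zero => exact hb
        | succ m => rw [Function.iterate_succ_apply]; exact hall m (Nat.lt_of_succ_lt_succ hk)
      · rwa [Function.iterate_succ_apply]
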